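/- Let 1 < s < 2 be a real number. There exists a constant C > 0 depending only on s such that for every ε ∈ [0,1] and all u, v ∈ ℝ one has |f_ε′(u + v) − f_ε′(u)| ≤ C·(|v|^{s−1} + ε·|u|^{s−1}). -/

import Mathlib

open Real

lemma rpow_add_le' {x y p : ℝ} (hx : 0 ≤ x) (hy : 0 ≤ y) (hp : 0 ≤ p) (hp1 : p ≤ 1) :
    (x + y) ^ p ≤ x ^ p + y ^ p := by
  lift x to NNReal using hx
  lift y to NNReal using hy
  have := NNReal.rpow_add_le_add_rpow x y hp hp1
  exact_mod_cast this

lemma abs_rpow_sub_le {x y α : ℝ} (hα : 0 ≤ α) (hα1 : α ≤ 1) :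
    abs (|x| ^ α - |y| ^ α) ≤ |x - y| ^ α := by
  have key : ∀ a b : ℝ, |a| ^ α - |b| ^ α ≤ |a - b| ^ α := by
    intro a b
    have h1 : |a| ≤ |b| + |a - b| := by
      have := abs_sub_abs_le_abs_sub a b
      linarith [abs_nonneg (a-b), abs_nonneg a, abs_nonneg b, le_abs_self (|a| - |b|)]
    have h2 : |a| ^ α ≤ (|b| + |a - b|) ^ α :=
      Real.rpow_le_rpow (abs_nonneg a) h1 hα
    have h3 : (|b| + |a - b|) ^ α ≤ |b| ^ α + |a - b| ^ α :=
      rpow_add_le' (abs_nonneg b) (abs_nonneg _) hα hα1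
    linarith
  rw [abs_sub_le_iff]
  constructor
  · exact (le_trans (by linarith [key x y]) (le_refl _))
  · have := key y x
    rwa [abs_sub_comm] at this

lemma rpow_diff_le {x y ε : ℝ} (hx : 1 ≤ x) (hy : 1 ≤ y) (hε : 0 ≤ ε) (hε1 : ε ≤ 1) :
    |x ^ ε - y ^ ε| ≤ ε * |x - y| := by
  have key : ∀ a b : ℝ, 1 ≤ a → 1 ≤ b → a ≤ b → b ^ ε - a ^ ε ≤ ε * (b - a) := by
    intro a b ha hb hab
    have ha0 : 0 < a := by linarith
    have ht : (0:ℝ) ≤ (b - a) / a := div_nonneg (by linarith) ha0.le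
    have hber : (1 + (b - a) / a) ^ ε ≤ 1 + ε * ((b - a) / a) :=
      rpow_one_add_le_one_add_mul_self (by linarith) hε hε1
    have hba : b = a * (1 + (b - a) / a) := by field_simp; ring
    have hb' : b ^ ε = a ^ ε * (1 + (b - a) / a) ^ ε := by
      rw [show a ^ ε * (1 + (b - a) / a) ^ ε = (a * (1 + (b - a) / a)) ^ ε from
        (Real.mul_rpow (le_of_lt ha0) (by linarith [ht])).symm, ← hba]
    have h1 : b ^ ε ≤ a ^ ε * (1 + ε * ((b - a) / a)) := by
      rw [hb']
      exact mul_le_mul_of_nonneg_left hber (Real.rpow_nonneg (le_of_lt ha0) ε)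
    have h2 : a ^ ε * (1 + ε * ((b - a) / a)) = a ^ ε + ε * (b - a) * (a ^ (ε - 1)) := by
      rw [Real.rpow_sub ha0, Real.rpow_one]
      field_simp
    have h3 : a ^ (ε - 1) ≤ 1 :=
      Real.rpow_le_one_of_one_le_of_nonpos ha (by linarith)
    have h4 : 0 ≤ ε * (b - a) := by nlinarith
    nlinarith [Real.rpow_nonneg (le_of_lt ha0) ε]
  rcases le_total x y with h | h
  · rw [abs_sub_comm, abs_of_nonneg (by nlinarith [Real.rpow_le_rpow (by linarith : (0:ℝ) ≤ x) h hε] : (0:ℝ) ≤ y ^ ε - x ^ ε), abs_sub_comm, abs_of_nonneg (by linarith)]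
    exact key x y hx hy h
  · rw [abs_of_nonneg (by nlinarith [Real.rpow_le_rpow (by linarith : (0:ℝ) ≤ y) h hε] : (0:ℝ) ≤ x ^ ε - y ^ ε), abs_of_nonneg (by linarith)]
    exact key y x hy hx h


/-- The non-power nonlinearity `f_ε(u) = |u|^{s-1} u / (ln(e+|u|))^ε`. -/
noncomputable def fNP (s ε u : ℝ) : ℝ :=
  |u| ^ (s - 1) * u / Real.log (Real.exp 1 + |u|) ^ ε

noncomputable def Dg (s ε u : ℝ) : ℝ :=
  |u| ^ (s - 1) / Real.log (Real.exp 1 + |u|) ^ ε *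
    (s - ε * |u| / ((Real.exp 1 + |u|) * Real.log (Real.exp 1 + |u|)))

lemma one_le_Lg (u : ℝ) : 1 ≤ Real.log (Real.exp 1 + |u|) := by
  have := Real.log_le_log (Real.exp_pos 1) (le_add_of_nonneg_right (abs_nonneg u) : Real.exp 1 ≤ Real.exp 1 + |u|)
  rwa [Real.log_exp] at this

lemma hasDerivAt_fNP {s ε : ℝ} (hs : 1 < s) (hε : 0 ≤ ε) (u : ℝ) :
    HasDerivAt (fNP s ε) (Dg s ε u) u := by
  rcases lt_trichotomy u 0 with hu | rfl | hu
  · -- u < 0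
    have hne : u ≠ 0 := ne_of_lt hu
    have hnu : (0:ℝ) < -u := by linarith
    have hnune : -u ≠ 0 := ne_of_gt hnu
    have hE : (0:ℝ) < Real.exp 1 + -u := by positivity
    have hL : 0 < Real.log (Real.exp 1 + -u) := by
      have := one_le_Lg u; rw [abs_of_neg hu] at this; linarith
    set L := Real.log (Real.exp 1 + -u) with hLdef
    have hLε : (0:ℝ) < L ^ ε := Real.rpow_pos_of_pos hL ε
    have hnum : HasDerivAt (fun x : ℝ => (-x) ^ (s - 1) * x)
        ((-1 * (s - 1) * (-u) ^ (s - 1 - 1)) * u + (-u) ^ (s - 1) * 1) u :=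
      (((hasDerivAt_neg u).rpow_const (Or.inl hnune))).mul (hasDerivAt_id u)
    have hden : HasDerivAt (fun x : ℝ => Real.log (Real.exp 1 + -x) ^ ε)
        ((-1 / (Real.exp 1 + -u)) * ε * L ^ (ε - 1)) u := by
      have h1 : HasDerivAt (fun x : ℝ => Real.exp 1 + -x) (-1) u :=
        (hasDerivAt_neg u).const_add _
      exact (h1.log (ne_of_gt hE)).rpow_const (Or.inl (ne_of_gt hL))
    have hdiv := hnum.div hden (ne_of_gt hLε)
    have heq : fNP s ε =ᶠ[nhds u]
        (fun x : ℝ => (-x) ^ (s - 1) * x / Real.log (Real.exp 1 + -x) ^ ε) := by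
      filter_upwards [Iio_mem_nhds hu] with x hx
      simp only [fNP, abs_of_neg (Set.mem_Iio.mp hx)]
    refine (hdiv.congr_of_eventuallyEq heq).congr_deriv ?_
    simp only [← hLdef]
    have hpow' : (-u) ^ (s - 1 - 1) = (-u) ^ (s - 1) / (-u) := by
      rw [eq_div_iff hnune, ← Real.rpow_add_one hnune]; norm_num
    have hLe : L ^ (ε - 1) = L ^ ε / L := by
      rw [Real.rpow_sub hL, Real.rpow_one]
    rw [Dg, abs_of_neg hu, hpow', hLe, sq]
    simp only [← hLdef]
    have hLne : L ≠ 0 := ne_of_gt hL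
    have hLεne : L ^ ε ≠ 0 := ne_of_gt hLε
    have hEne : Real.exp 1 + -u ≠ 0 := ne_of_gt hE
    field_simp
    ring
  · -- u = 0
    have hs0 : s - 1 ≠ 0 := by linarith
    have hDg0 : Dg s ε 0 = 0 := by
      simp [Dg, Real.zero_rpow hs0]
    rw [hDg0, hasDerivAt_iff_tendsto_slope]
    have hf0 : fNP s ε 0 = 0 := by simp [fNP, Real.zero_rpow hs0]
    have htd : Filter.Tendsto (fun x : ℝ => |x| ^ (s - 1)) (nhdsWithin (0:ℝ) {(0:ℝ)}ᶜ) (nhds 0) := by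
      have hc : Continuous (fun x : ℝ => |x| ^ (s - 1)) :=
        continuous_abs.rpow_const (fun x => Or.inr (by linarith))
      have h2 := hc.tendsto 0
      simp only [abs_zero, Real.zero_rpow hs0] at h2
      exact h2.mono_left nhdsWithin_le_nhds
    refine squeeze_zero_norm (fun x => ?_) htd
    rcases eq_or_ne x 0 with rfl | hx
    · simp [Real.rpow_nonneg]
    · have hL1 : (1:ℝ) ≤ Real.log (Real.exp 1 + |x|) ^ ε :=
        Real.one_le_rpow (one_le_Lg x) hε
      have hxa : (0:ℝ) < |x| := abs_pos.mpr hx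
      have hK : (0:ℝ) < Real.log (Real.exp 1 + |x|) ^ ε := lt_of_lt_of_le one_pos hL1
      have h1 : |fNP s ε x| ≤ |x| ^ (s - 1) * |x| := by
        rw [fNP, abs_div, abs_mul, abs_of_nonneg (Real.rpow_nonneg (abs_nonneg x) _),
          abs_of_pos hK]
        exact div_le_self (by positivity) hL1
      rw [slope_def_field, hf0, sub_zero, sub_zero, Real.norm_eq_abs, abs_div]
      rw [div_le_iff₀ hxa]
      exact h1
  · -- u > 0
    have hne : u ≠ 0 := ne_of_gt hu
    have hE : (0:ℝ) < Real.exp 1 + u := by positivity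
    have hL : 0 < Real.log (Real.exp 1 + u) := by
      have := one_le_Lg u; rw [abs_of_pos hu] at this; linarith
    set L := Real.log (Real.exp 1 + u) with hLdef
    have hLε : (0:ℝ) < L ^ ε := Real.rpow_pos_of_pos hL ε
    have hnum : HasDerivAt (fun x : ℝ => x ^ (s - 1) * x)
        ((1 * (s - 1) * u ^ (s - 1 - 1)) * u + u ^ (s - 1) * 1) u :=
      ((hasDerivAt_id u).rpow_const (Or.inl hne)).mul (hasDerivAt_id u)
    have hden : HasDerivAt (fun x : ℝ => Real.log (Real.exp 1 + x) ^ ε)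
        ((1 / (Real.exp 1 + u)) * ε * L ^ (ε - 1)) u := by
      have h1 : HasDerivAt (fun x : ℝ => Real.exp 1 + x) 1 u :=
        (hasDerivAt_id u).const_add _
      exact (h1.log (ne_of_gt hE)).rpow_const (Or.inl (ne_of_gt hL))
    have hdiv := hnum.div hden (ne_of_gt hLε)
    have heq : fNP s ε =ᶠ[nhds u]
        (fun x : ℝ => x ^ (s - 1) * x / Real.log (Real.exp 1 + x) ^ ε) := by
      filter_upwards [Ioi_mem_nhds hu] with x hx
      simp only [fNP, abs_of_pos (Set.mem_Ioi.mp hx)]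
    refine (hdiv.congr_of_eventuallyEq heq).congr_deriv ?_
    simp only [← hLdef]
    have hpow' : u ^ (s - 1 - 1) = u ^ (s - 1) / u := by
      rw [eq_div_iff hne, ← Real.rpow_add_one hne]; norm_num
    have hLe : L ^ (ε - 1) = L ^ ε / L := by
      rw [Real.rpow_sub hL, Real.rpow_one]
    rw [Dg, abs_of_pos hu, hpow', hLe, sq]
    simp only [← hLdef]
    have hLne : L ≠ 0 := ne_of_gt hL
    have hLεne : L ^ ε ≠ 0 := ne_of_gt hLε
    have hEne : Real.exp 1 + u ≠ 0 := ne_of_gt hE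
    field_simp
    ring

lemma one_le_Q {u ε : ℝ} (hε : 0 ≤ ε) : 1 ≤ Real.log (Real.exp 1 + |u|) ^ ε := by
  have h := Real.rpow_le_rpow_of_exponent_le (one_le_Lg u) hε
  rwa [Real.rpow_zero] at h

lemma decomp (A B Qa Qb ma mb : ℝ) (ha : Qa ≠ 0) (hb : Qb ≠ 0) :
    A / Qa * ma - B / Qb * mb =
      (A - B) / Qa * ma + B * ((Qb - Qa) / (Qa * Qb)) * ma + B / Qb * (ma - mb) := by
  field_simp
  ring

lemma genbound {A B Qa Qb ma mb V σ δ : ℝ}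
    (hB : 0 ≤ B) (hQa : 1 ≤ Qa) (hQb : 1 ≤ Qb)
    (hAB : |A - B| ≤ V) (hma : |ma| ≤ σ) (hQd : |Qa - Qb| ≤ δ)
    (hmd : |ma - mb| ≤ δ) :
    |A / Qa * ma - B / Qb * mb| ≤ σ * V + B * σ * δ + B * δ := by
  have hQa0 : (0:ℝ) < Qa := lt_of_lt_of_le one_pos hQa
  have hQb0 : (0:ℝ) < Qb := lt_of_lt_of_le one_pos hQb
  have hσ : 0 ≤ σ := le_trans (abs_nonneg _) hma
  have hδ : 0 ≤ δ := le_trans (abs_nonneg _) hQd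
  have hV : 0 ≤ V := le_trans (abs_nonneg _) hAB
  rw [decomp A B Qa Qb ma mb (ne_of_gt hQa0) (ne_of_gt hQb0)]
  have t1 : |(A - B) / Qa * ma| ≤ σ * V := by
    rw [abs_mul, abs_div, abs_of_pos hQa0]
    have h1 : |A - B| / Qa ≤ V := le_trans (div_le_self (abs_nonneg _) hQa) hAB
    exact (mul_le_mul h1 hma (abs_nonneg _) hV).trans_eq (mul_comm _ _)
  have t2 : |B * ((Qb - Qa) / (Qa * Qb)) * ma| ≤ B * σ * δ := by
    rw [abs_mul, abs_mul, abs_of_nonneg hB, abs_div, abs_of_pos (mul_pos hQa0 hQb0)]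
    have hone : (1:ℝ) ≤ Qa * Qb := by nlinarith
    have h1 : |Qb - Qa| / (Qa * Qb) ≤ δ := by
      refine le_trans (div_le_self (abs_nonneg _) hone) ?_
      rwa [abs_sub_comm]
    exact (mul_le_mul (mul_le_mul_of_nonneg_left h1 hB) hma (abs_nonneg _)
      (by positivity)).trans_eq (by ring)
  have t3 : |B / Qb * (ma - mb)| ≤ B * δ := by
    rw [abs_mul, abs_div, abs_of_nonneg hB, abs_of_pos hQb0]
    exact mul_le_mul (div_le_self hB hQb) hmd (abs_nonneg _) hB
  have hsum := abs_add_three ((A - B) / Qa * ma) (B * ((Qb - Qa) / (Qa * Qb)) * ma)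
    (B / Qb * (ma - mb))
  linarith

lemma r_mem {w : ℝ} :
    0 ≤ |w| / ((Real.exp 1 + |w|) * Real.log (Real.exp 1 + |w|)) ∧
    |w| / ((Real.exp 1 + |w|) * Real.log (Real.exp 1 + |w|)) ≤ 1 := by
  have hE : (0:ℝ) < Real.exp 1 + |w| := by positivity
  have hL := one_le_Lg w
  constructor
  · positivity
  · rw [div_le_one (by positivity)]
    nlinarith [abs_nonneg w, Real.exp_pos 1]

lemma m_abs_le {s ε w : ℝ} (hs : 1 < s) (hε0 : 0 ≤ ε) (hε1 : ε ≤ 1) :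
    |s - ε * (|w| / ((Real.exp 1 + |w|) * Real.log (Real.exp 1 + |w|)))| ≤ s := by
  obtain ⟨hr0, hr1⟩ := r_mem (w := w)
  rw [abs_le]
  constructor <;> nlinarith

lemma Dg_eq (s ε u : ℝ) :
    Dg s ε u = |u| ^ (s - 1) / Real.log (Real.exp 1 + |u|) ^ ε *
      (s - ε * (|u| / ((Real.exp 1 + |u|) * Real.log (Real.exp 1 + |u|)))) := by
  rw [Dg, mul_div_assoc]

lemma Dg_abs_le {s ε w : ℝ} (hs : 1 < s) (hε0 : 0 ≤ ε) (hε1 : ε ≤ 1) :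
    |Dg s ε w| ≤ s * |w| ^ (s - 1) := by
  have hQ1 : (1:ℝ) ≤ Real.log (Real.exp 1 + |w|) ^ ε := one_le_Q hε0
  have hQ0 : (0:ℝ) < Real.log (Real.exp 1 + |w|) ^ ε := lt_of_lt_of_le one_pos hQ1
  have hφ : 0 ≤ |w| ^ (s - 1) := Real.rpow_nonneg (abs_nonneg w) _
  rw [Dg_eq, abs_mul, abs_div, abs_of_nonneg hφ, abs_of_pos hQ0]
  calc |w| ^ (s - 1) / Real.log (Real.exp 1 + |w|) ^ ε *
        |s - ε * (|w| / ((Real.exp 1 + |w|) * Real.log (Real.exp 1 + |w|)))|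
      ≤ |w| ^ (s - 1) * s :=
        mul_le_mul (div_le_self hφ hQ1) (m_abs_le hs hε0 hε1) (abs_nonneg _) hφ
    _ = s * |w| ^ (s - 1) := mul_comm _ _

lemma Dg_diff_bound {s ε a b : ℝ} (hs1 : 1 < s) (hs2 : s < 2) (hε0 : 0 ≤ ε) (hε1 : ε ≤ 1)
    (hLab : |Real.log (Real.exp 1 + |a|) - Real.log (Real.exp 1 + |b|)| ≤ 1) :
    |Dg s ε a - Dg s ε b| ≤ s * |a - b| ^ (s - 1) + (s + 1) * (ε * |b| ^ (s - 1)) := by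
  have hQd : |Real.log (Real.exp 1 + |a|) ^ ε - Real.log (Real.exp 1 + |b|) ^ ε| ≤ ε := by
    refine le_trans (rpow_diff_le (one_le_Lg a) (one_le_Lg b) hε0 hε1) ?_
    nlinarith
  have hmd : |(s - ε * (|a| / ((Real.exp 1 + |a|) * Real.log (Real.exp 1 + |a|)))) -
      (s - ε * (|b| / ((Real.exp 1 + |b|) * Real.log (Real.exp 1 + |b|))))| ≤ ε := by
    obtain ⟨ha0, ha1⟩ := r_mem (w := a)
    obtain ⟨hb0, hb1⟩ := r_mem (w := b)
    rw [abs_le]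
    constructor <;> nlinarith
  have hAB : abs (|a| ^ (s - 1) - |b| ^ (s - 1)) ≤ |a - b| ^ (s - 1) :=
    abs_rpow_sub_le (by linarith) (by linarith)
  rw [Dg_eq, Dg_eq]
  have h := genbound (Real.rpow_nonneg (abs_nonneg b) (s - 1)) (one_le_Q hε0 (u := a))
    (one_le_Q hε0 (u := b)) hAB (m_abs_le hs1 hε0 hε1) hQd hmd
  refine le_trans h ?_
  have hB : 0 ≤ |b| ^ (s - 1) := Real.rpow_nonneg (abs_nonneg b) _
  nlinarith

theorem stmt4 (s : ℝ) (hs1 : 1 < s) (hs2 : s < 2) :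
    ∃ C > 0, ∀ ε ∈ Set.Icc (0 : ℝ) 1, ∀ u v : ℝ,
      |deriv (fNP s ε) (u + v) - deriv (fNP s ε) u| ≤
        C * (|v| ^ (s - 1) + ε * |u| ^ (s - 1)) := by
  refine ⟨5 * s + 2, by linarith, ?_⟩
  rintro ε ⟨hε0, hε1⟩ u v
  have hds : ∀ w, deriv (fNP s ε) w = Dg s ε w := fun w => (hasDerivAt_fNP hs1 hε0 w).deriv
  rw [hds, hds]
  have hφv : 0 ≤ |v| ^ (s - 1) := Real.rpow_nonneg (abs_nonneg v) _
  have hφu : 0 ≤ |u| ^ (s - 1) := Real.rpow_nonneg (abs_nonneg u) _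
  have hεφ : 0 ≤ ε * |u| ^ (s - 1) := mul_nonneg hε0 hφu
  rcases le_or_gt |u| (2 * |v|) with hcase | hcase
  · -- case A
    have h1 := Dg_abs_le (w := u + v) hs1 hε0 hε1
    have h2 := Dg_abs_le (w := u) hs1 hε0 hε1
    have hab : |Dg s ε (u + v) - Dg s ε u| ≤ s * |u + v| ^ (s - 1) + s * |u| ^ (s - 1) :=
      le_trans (abs_sub _ _) (add_le_add h1 h2)
    have h3 : |u + v| ^ (s - 1) ≤ |u| ^ (s - 1) + |v| ^ (s - 1) := by
      calc |u + v| ^ (s - 1) ≤ (|u| + |v|) ^ (s - 1) :=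
            Real.rpow_le_rpow (abs_nonneg _) (abs_add_le u v) (by linarith)
        _ ≤ _ := rpow_add_le' (abs_nonneg u) (abs_nonneg v) (by linarith) (by linarith)
    have h4 : |u| ^ (s - 1) ≤ 2 * |v| ^ (s - 1) := by
      calc |u| ^ (s - 1) ≤ (2 * |v|) ^ (s - 1) :=
            Real.rpow_le_rpow (abs_nonneg u) hcase (by linarith)
        _ = 2 ^ (s - 1) * |v| ^ (s - 1) := Real.mul_rpow (by norm_num) (abs_nonneg v)
        _ ≤ 2 * |v| ^ (s - 1) := by
            have h5 : (2:ℝ) ^ (s - 1) ≤ 2 ^ (1:ℝ) :=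
              Real.rpow_le_rpow_of_exponent_le one_le_two (by linarith)
            rw [Real.rpow_one] at h5
            exact mul_le_mul_of_nonneg_right h5 hφv
    nlinarith [mul_le_mul_of_nonneg_left h3 (by linarith : (0:ℝ) ≤ s),
      mul_le_mul_of_nonneg_left h4 (by linarith : (0:ℝ) ≤ s),
      mul_nonneg (by linarith : (0:ℝ) ≤ 5 * s + 2) hεφ]
  · -- case B
    have hEa : (0:ℝ) < Real.exp 1 + |u + v| := by positivity
    have hEb : (0:ℝ) < Real.exp 1 + |u| := by positivity
    have hauv : |u| ≤ |u + v| + |v| := by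
      have h := abs_add_le (u + v) (-v)
      rw [abs_neg] at h
      simpa using h
    have hlog2 : Real.log 2 ≤ 1 := by
      have := Real.log_le_sub_one_of_pos (by norm_num : (0:ℝ) < 2)
      linarith
    have hLab : |Real.log (Real.exp 1 + |u + v|) - Real.log (Real.exp 1 + |u|)| ≤ 1 := by
      rw [abs_sub_le_iff]
      constructor
      · have hle : Real.exp 1 + |u + v| ≤ 2 * (Real.exp 1 + |u|) := by
          have := abs_add_le u v
          nlinarith [Real.exp_pos 1]
        have h := Real.log_le_log hEa hle
        rw [Real.log_mul two_ne_zero (ne_of_gt hEb)] at h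
        linarith
      · have hle : Real.exp 1 + |u| ≤ 2 * (Real.exp 1 + |u + v|) := by
          nlinarith [Real.exp_pos 1]
        have h := Real.log_le_log hEb hle
        rw [Real.log_mul two_ne_zero (ne_of_gt hEa)] at h
        linarith
    have h := Dg_diff_bound (a := u + v) (b := u) hs1 hs2 hε0 hε1 hLab
    rw [add_sub_cancel_left] at h
    nlinarith
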